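/- The function f : [0,1] → ℝ, f(u) = sqrt(r⁴ − u⁴) for u ≤ r and f(u) = 0 for u > r, is uniformly 1/2-Hölder on [0,1] with a constant independent of r ∈ (0,1]: |f(u) − f(v)| ≤ C·|u−v|^{1/2} for all u,v ∈ [0,1]. -/

import Mathlib

/-! Since `√` is 1/2-Hölder with constant 1 on `[0, ∞)`, truncation `max · 0` is 1-Lipschitz
and `u ↦ u ^ 4` is 4-Lipschitz on `[0, 1]`, the composite `u ↦ √(max (r ^ 4 - u ^ 4) 0)` is
1/2-Hölder with constant `√4 = 2`, whatever `r` is. -/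

open Real

theorem Real.abs_sqrt_sub_sqrt_le_sqrt_abs_sub {a b : ℝ} (ha : 0 ≤ a) (hb : 0 ≤ b) :
    |√a - √b| ≤ √|a - b| := by
  rw [Real.le_sqrt (abs_nonneg _) (abs_nonneg _)]
  have hdiff : |√a - √b| ≤ √a + √b :=
    abs_sub_le_iff.2 ⟨by linarith [sqrt_nonneg b], by linarith [sqrt_nonneg a]⟩
  have hprod : (√a - √b) * (√a + √b) = a - b := by
    ring_nf
    rw [sq_sqrt ha, sq_sqrt hb]
  calc |√a - √b| ^ 2 ≤ |√a - √b| * (√a + √b) := by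
        rw [sq]; exact mul_le_mul_of_nonneg_left hdiff (abs_nonneg _)
    _ = |a - b| := by
        rw [← hprod, abs_mul, abs_of_nonneg (add_nonneg (sqrt_nonneg a) (sqrt_nonneg b))]

theorem abs_sqrt_max_sub_sub_le (a x y : ℝ) :
    |√(max (a - x) 0) - √(max (a - y) 0)| ≤ √|x - y| := by
  refine (abs_sqrt_sub_sqrt_le_sqrt_abs_sub (le_max_right _ _) (le_max_right _ _)).trans ?_
  refine sqrt_le_sqrt ((abs_max_sub_max_le_abs _ _ _).trans_eq ?_)
  rw [sub_sub_sub_cancel_left, abs_sub_comm]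

theorem abs_pow_sub_pow_le_of_abs_le_one {a b : ℝ} (ha : |a| ≤ 1) (hb : |b| ≤ 1) (n : ℕ) :
    |a ^ n - b ^ n| ≤ n * |a - b| := by
  have hmax : max |a| |b| ^ (n - 1) ≤ 1 :=
    pow_le_one₀ (le_max_of_le_left (abs_nonneg a)) (max_le ha hb)
  calc |a ^ n - b ^ n| ≤ |a - b| * n * max |a| |b| ^ (n - 1) := abs_pow_sub_pow_le a b n
    _ ≤ |a - b| * n * 1 := by gcongr
    _ = n * |a - b| := by ring

/-- The function `f(u) = sqrt(max(r⁴ − u⁴, 0))` is uniformly 1/2-Hölder on `[0,1]`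
with a constant independent of `r ∈ (0,1]`. -/
theorem sqrt_r4_sub_u4_holder :
    ∃ C : ℝ, 0 < C ∧ ∀ r : ℝ, 0 < r → r ≤ 1 →
      ∀ u v : ℝ, u ∈ Set.Icc (0 : ℝ) 1 → v ∈ Set.Icc (0 : ℝ) 1 →
        |Real.sqrt (max (r ^ 4 - u ^ 4) 0) - Real.sqrt (max (r ^ 4 - v ^ 4) 0)|
          ≤ C * |u - v| ^ ((1 : ℝ) / 2) := by
  refine ⟨2, two_pos, fun r _ _ u v ⟨hu₀, hu₁⟩ ⟨hv₀, hv₁⟩ => ?_⟩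
  have hpow : |u ^ 4 - v ^ 4| ≤ 4 * |u - v| := by
    exact_mod_cast abs_pow_sub_pow_le_of_abs_le_one (abs_le.2 ⟨by linarith, hu₁⟩)
      (abs_le.2 ⟨by linarith, hv₁⟩) 4
  calc |√(max (r ^ 4 - u ^ 4) 0) - √(max (r ^ 4 - v ^ 4) 0)| ≤ √|u ^ 4 - v ^ 4| :=
        abs_sqrt_max_sub_sub_le _ _ _
    _ ≤ √(2 ^ 2 * |u - v|) := sqrt_le_sqrt (by norm_num [hpow])
    _ = 2 * |u - v| ^ ((1 : ℝ) / 2) := by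
        rw [sqrt_mul (by norm_num), sqrt_sq zero_le_two, sqrt_eq_rpow]
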